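/- The series ∑_{p prime} (log p)·(p² + 3p + 1)/(p(p+1)³) converges and equals 3/4 + log 2 + ∫_1^∞ E(t)·(2t³ + 8t² + 4t + 1)/(t²(t+1)⁴) dt, where the integral converges absolutely. -/

import Mathlib

open Real MeasureTheory

/-- Chebyshev theta function: `θ(t) = ∑_{p ≤ t, p prime} log p`. -/
noncomputable def chebTheta (t : ℝ) : ℝ :=
  ∑ p ∈ (Finset.range (Nat.floor t + 1)).filter Nat.Prime, Real.log p

/-- Error term in the Prime Number Theorem: `E(t) = θ(t) − t`. -/
noncomputable def chebE (t : ℝ) : ℝ := chebTheta t - t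

noncomputable def cc (k : ℕ) : ℝ := if Nat.Prime k then Real.log k else 0

lemma theta_eq (t : ℝ) : ∑ k ∈ Finset.Icc 0 (Nat.floor t), cc k = chebTheta t := by
  rw [chebTheta, show Finset.Icc 0 (Nat.floor t) = Finset.range (Nat.floor t + 1) by
    ext k; simp [Nat.lt_succ_iff], Finset.sum_filter]
  rfl

lemma theta_nonneg (t : ℝ) : 0 ≤ chebTheta t := by
  refine Finset.sum_nonneg fun p hp => ?_
  simp only [Finset.mem_filter] at hp
  exact Real.log_nonneg (by exact_mod_cast hp.2.one_lt.le)

lemma theta_le (t : ℝ) (ht : 0 ≤ t) : chebTheta t ≤ t * Real.log 4 := by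
  have h1 : chebTheta t = Real.log (primorial (Nat.floor t)) := by
    rw [chebTheta, primorial, Nat.cast_prod,
      Real.log_prod (fun p hp => by
        simp only [Finset.mem_filter] at hp
        exact_mod_cast hp.2.pos.ne')]
  rw [h1]
  calc Real.log (primorial (Nat.floor t)) ≤ Real.log (4 ^ (Nat.floor t)) := by
        apply Real.log_le_log (by exact_mod_cast primorial_pos _)
        exact_mod_cast primorial_le_4_pow _
    _ = (Nat.floor t) * Real.log 4 := by
        rw [Real.log_pow]
    _ ≤ t * Real.log 4 := by
        apply mul_le_mul_of_nonneg_right (Nat.floor_le ht)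
        positivity

lemma absE_le (t : ℝ) (ht : 1 ≤ t) : |chebE t| ≤ 3 * t := by
  have h0 : (0:ℝ) ≤ t := by linarith
  have h4 : Real.log 4 ≤ 2 := by
    have e1 : (2:ℝ) ≤ Real.exp 1 := by nlinarith [Real.add_one_le_exp (1:ℝ)]
    have : (4:ℝ) ≤ Real.exp 2 := by
      have : Real.exp 2 = Real.exp 1 * Real.exp 1 := by
        rw [← Real.exp_add]; norm_num
      nlinarith
    calc Real.log 4 ≤ Real.log (Real.exp 2) := Real.log_le_log (by norm_num) this
      _ = 2 := Real.log_exp 2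
  have h2 := theta_le t h0
  have h3 := theta_nonneg t
  rw [chebE, abs_le]
  constructor <;> nlinarith

lemma measurable_theta : Measurable chebTheta := by
  have : chebTheta = (fun n : ℕ => ∑ p ∈ (Finset.range (n + 1)).filter Nat.Prime, Real.log p) ∘ Nat.floor := rfl
  rw [this]
  exact (measurable_from_top).comp Nat.measurable_floor

lemma measurable_chebE : Measurable chebE :=
  measurable_theta.sub measurable_id

noncomputable def ff (x : ℝ) : ℝ := (x^2 + 3*x + 1) / (x * (x+1)^3)
noncomputable def ww (t : ℝ) : ℝ := (2*t^3 + 8*t^2 + 4*t + 1) / (t^2 * (t+1)^4)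

lemma hasDerivAt_ff {t : ℝ} (ht : 0 < t) : HasDerivAt ff (-(ww t)) t := by
  have h2 : t + 1 ≠ 0 := by positivity
  have hD : t * (t+1)^3 ≠ 0 := by positivity
  have hN : HasDerivAt (fun x : ℝ => x^2 + 3*x + 1) (2*t + 3) t := by
    have := ((hasDerivAt_pow 2 t).add ((hasDerivAt_id t).const_mul 3)).add_const 1
    exact this.congr_deriv (by norm_num)
  have hDen : HasDerivAt (fun x : ℝ => x * (x+1)^3)
      (1 * (t+1)^3 + t * (3 * (t+1)^2 * 1)) t := by
    exact (hasDerivAt_id t).mul (((hasDerivAt_id t).add_const 1).pow 3)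
  have := hN.div hDen hD
  refine this.congr_deriv ?_
  rw [ww]
  field_simp
  ring

noncomputable def AA (t : ℝ) : ℝ :=
  -((t^2 + 3*t + 1) / (t+1)^3) - 1 / (2*(t+1)^2) + Real.log t - Real.log (t+1)

lemma hasDerivAt_AA {t : ℝ} (ht : 0 < t) : HasDerivAt AA (t * ww t) t := by
  have h2 : t + 1 ≠ 0 := by positivity
  have h3 : ((t:ℝ)+1)^3 ≠ 0 := by positivity
  have h4 : (2*((t:ℝ)+1)^2) ≠ 0 := by positivity
  have hN : HasDerivAt (fun x : ℝ => x^2 + 3*x + 1) (2*t + 3) t := by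
    have := ((hasDerivAt_pow 2 t).add ((hasDerivAt_id t).const_mul 3)).add_const 1
    exact this.congr_deriv (by norm_num)
  have hD3 : HasDerivAt (fun x : ℝ => (x+1)^3) (3 * (t+1)^2 * 1) t :=
    ((hasDerivAt_id t).add_const 1).pow 3
  have hT1 : HasDerivAt (fun x : ℝ => -((x^2 + 3*x + 1) / (x+1)^3))
      (-(((2*t+3) * (t+1)^3 - (t^2+3*t+1) * (3*(t+1)^2*1)) / ((t+1)^3)^2)) t :=
    (hN.div hD3 h3).neg
  have hD2 : HasDerivAt (fun x : ℝ => 2*(x+1)^2) (2 * (2 * (t+1)^1 * 1)) t :=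
    (((hasDerivAt_id t).add_const 1).pow 2).const_mul 2
  have hT2 : HasDerivAt (fun x : ℝ => 1 / (2*(x+1)^2))
      (-(1 * (2 * (2 * (t+1)^1 * 1)) / (2*(t+1)^2)^2)) t := by
    have := (hasDerivAt_const t (1:ℝ)).div hD2 h4
    exact this.congr_deriv (by ring)
  have hL1 : HasDerivAt Real.log t⁻¹ t := Real.hasDerivAt_log ht.ne'
  have hL2 : HasDerivAt (fun x : ℝ => Real.log (x+1)) (t+1)⁻¹ t := by
    have := (Real.hasDerivAt_log h2).comp t ((hasDerivAt_id t).add_const 1)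
    simpa [Function.comp_def] using this
  have := ((hT1.sub hT2).add hL1).sub hL2
  refine this.congr_deriv ?_
  rw [ww]
  field_simp
  ring

lemma ww_pos {t : ℝ} (ht : 0 < t) : 0 < ww t := by
  rw [ww]; positivity

lemma ww_le {t : ℝ} (ht : 1 ≤ t) : ww t ≤ 15 / t^3 := by
  have ht0 : (0:ℝ) < t := by linarith
  rw [ww, div_le_div_iff₀ (by positivity) (by positivity)]
  nlinarith [sq_nonneg t, pow_le_pow_left₀ (by positivity : (0:ℝ) ≤ t) (by linarith : t ≤ t + 1) 4,
    sq_nonneg (t-1), pow_pos ht0 3, pow_pos ht0 2]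

lemma measurable_ww : Measurable ww := by
  apply Measurable.div <;> fun_prop

lemma integrableOn_EW : IntegrableOn (fun t => chebE t * ww t) (Set.Ioi (1:ℝ)) := by
  have hbase : IntegrableOn (fun t : ℝ => 45 * t ^ (-2:ℝ)) (Set.Ioi 1) :=
    (integrableOn_Ioi_rpow_of_lt (by norm_num) one_pos).const_mul 45
  refine Integrable.mono' hbase ((measurable_chebE.mul measurable_ww).aestronglyMeasurable) ?_
  rw [ae_restrict_iff' measurableSet_Ioi]
  filter_upwards with t ht
  simp only [Set.mem_Ioi] at ht
  have ht1 : (1:ℝ) ≤ t := ht.le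
  have ht0 : (0:ℝ) < t := by linarith
  have h1 : ‖chebE t * ww t‖ = |chebE t| * ww t := by
    rw [norm_mul, Real.norm_eq_abs, Real.norm_eq_abs, abs_of_pos (ww_pos ht0)]
  rw [h1]
  calc |chebE t| * ww t ≤ (3*t) * (15 / t^3) :=
        mul_le_mul (absE_le t ht1) (ww_le ht1) (ww_pos ht0).le (by positivity)
    _ = 45 * t ^ (-2:ℝ) := by
        rw [Real.rpow_neg ht0.le, show ((2:ℝ) = ((2:ℕ):ℝ)) by norm_num, Real.rpow_natCast]
        field_simp
        ring

lemma summable_term : Summable (fun p : ℕ => if Nat.Prime p then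
    Real.log p * ((p:ℝ)^2 + 3*(p:ℝ) + 1) / ((p:ℝ) * ((p:ℝ) + 1)^3) else 0) := by
  have hbase : Summable (fun n : ℕ => 10 * (n:ℝ) ^ (-(3/2) : ℝ)) :=
    (Real.summable_nat_rpow.mpr (by norm_num)).mul_left 10
  refine Summable.of_nonneg_of_le (fun n => ?_) (fun n => ?_) hbase
  · split
    · next hp =>
      have h2 : (2:ℝ) ≤ (n:ℝ) := by exact_mod_cast hp.two_le
      have hlog : (0:ℝ) ≤ Real.log n := Real.log_nonneg (by linarith)
      positivity
    · exact le_refl 0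
  · split
    · next hp =>
      have h2 : (2:ℝ) ≤ (n:ℝ) := by exact_mod_cast hp.two_le
      have hn0 : (0:ℝ) < n := by linarith
      have hlog : Real.log n ≤ 2 * (n:ℝ) ^ ((1:ℝ)/2) := by
        have := Real.log_natCast_le_rpow_div n (by norm_num : (0:ℝ) < 1/2)
        calc Real.log n ≤ (n:ℝ) ^ ((1:ℝ)/2) / (1/2) := this
          _ = 2 * (n:ℝ) ^ ((1:ℝ)/2) := by ring
      have hfrac : ((n:ℝ)^2 + 3*(n:ℝ) + 1) / ((n:ℝ) * ((n:ℝ) + 1)^3) ≤ 5 / (n:ℝ)^2 := by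
        rw [div_le_div_iff₀ (by positivity) (by positivity)]
        nlinarith [pow_le_pow_left₀ (by positivity : (0:ℝ) ≤ (n:ℝ)) (by linarith : (n:ℝ) ≤ (n:ℝ)+1) 3,
          pow_pos hn0 2, pow_pos hn0 3, sq_nonneg ((n:ℝ) - 1)]
      have hlogpos : (0:ℝ) ≤ Real.log n := Real.log_nonneg (by linarith)
      calc Real.log n * ((n:ℝ)^2 + 3*(n:ℝ) + 1) / ((n:ℝ) * ((n:ℝ) + 1)^3)
          = Real.log n * (((n:ℝ)^2 + 3*(n:ℝ) + 1) / ((n:ℝ) * ((n:ℝ) + 1)^3)) := by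
            rw [mul_div_assoc]
        _ ≤ (2 * (n:ℝ) ^ ((1:ℝ)/2)) * (5 / (n:ℝ)^2) := by
            apply mul_le_mul hlog hfrac (by positivity) (by positivity)
        _ = 10 * ((n:ℝ) ^ ((1:ℝ)/2) / (n:ℝ)^2) := by ring
        _ = 10 * (n:ℝ) ^ (-(3/2) : ℝ) := by
            congr 1
            rw [← Real.rpow_natCast (n:ℝ) 2, ← Real.rpow_sub hn0]
            norm_num
    · next hp =>
      positivity

lemma deriv_ff_eq {t : ℝ} (ht : 0 < t) : deriv ff t = -(ww t) :=
  (hasDerivAt_ff ht).deriv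

lemma continuousOn_ww : ContinuousOn ww (Set.Ici (1:ℝ)) := by
  apply ContinuousOn.div (by fun_prop) (by fun_prop)
  intro t ht
  simp only [Set.mem_Ici] at ht
  positivity

lemma abel_step (n : ℕ) (hn : 1 ≤ n) :
    ∑ k ∈ Finset.Icc 0 n, ff k * cc k
      = ff n * chebTheta n - ∫ t in Set.Ioc 1 (n:ℝ), (-(ww t)) * chebTheta t := by
  have hc0 : cc 0 = 0 := by simp [cc, Nat.not_prime_zero]
  have hderiv : ∀ t ∈ Set.Icc (1:ℝ) (n:ℝ), deriv ff t = -(ww t) :=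
    fun t ht => deriv_ff_eq (by have := ht.1; linarith)
  have hdiff : ∀ t ∈ Set.Icc (1:ℝ) (n:ℝ), DifferentiableAt ℝ ff t :=
    fun t ht => (hasDerivAt_ff (by have := ht.1; linarith)).differentiableAt
  have hint : IntegrableOn (deriv ff) (Set.Icc 1 (n:ℝ)) := by
    apply IntegrableOn.congr_fun (f := fun t => -(ww t))
    · exact ((continuousOn_ww.mono (Set.Icc_subset_Ici_self)).neg).integrableOn_compact
        isCompact_Icc
    · intro t ht; exact (hderiv t ht).symm
    · exact measurableSet_Icc
  have h := sum_mul_eq_sub_integral_mul₀ cc (f := ff) hc0 (n:ℝ) hdiff hint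
  rw [Nat.floor_natCast] at h
  have hth : chebTheta (n:ℝ) = ∑ k ∈ Finset.Icc 0 n, cc k := by
    rw [← theta_eq, Nat.floor_natCast]
  rw [h, hth]
  congr 1
  apply setIntegral_congr_fun measurableSet_Ioc
  intro t ht
  simp only []
  rw [hderiv t ⟨ht.1.le, ht.2⟩, theta_eq]

lemma ftc_step (n : ℕ) (hn : 1 ≤ n) :
    ∫ t in Set.Ioc 1 (n:ℝ), t * ww t = AA n - AA 1 := by
  have hn' : (1:ℝ) ≤ (n:ℝ) := by exact_mod_cast hn
  have huIcc : Set.uIcc (1:ℝ) (n:ℝ) = Set.Icc 1 (n:ℝ) := Set.uIcc_of_le hn'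
  have hcont : ContinuousOn (fun t : ℝ => t * ww t) (Set.uIcc 1 (n:ℝ)) := by
    rw [huIcc]
    exact (continuousOn_id.mul (continuousOn_ww.mono Set.Icc_subset_Ici_self))
  have hii : IntervalIntegrable (fun t : ℝ => t * ww t) volume 1 (n:ℝ) :=
    hcont.intervalIntegrable
  have h := intervalIntegral.integral_eq_sub_of_hasDerivAt
    (f := AA) (f' := fun t => t * ww t) (a := (1:ℝ)) (b := (n:ℝ))
    (fun t ht => hasDerivAt_AA (by rw [huIcc] at ht; have := ht.1; linarith)) hii
  rw [← h, intervalIntegral.integral_of_le hn']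

lemma AA_one : AA 1 = -(3/4) - Real.log 2 := by
  rw [AA]
  norm_num [Real.log_one]

lemma split_step (n : ℕ) (hn : 1 ≤ n) :
    ∫ t in Set.Ioc 1 (n:ℝ), (-(ww t)) * chebTheta t
      = -(AA n - AA 1) - ∫ t in Set.Ioc 1 (n:ℝ), chebE t * ww t := by
  have I1 : IntegrableOn (fun t : ℝ => t * ww t) (Set.Ioc 1 (n:ℝ)) :=
    ((continuousOn_id.mul (continuousOn_ww.mono Set.Icc_subset_Ici_self)).integrableOn_compact
      isCompact_Icc).mono_set Set.Ioc_subset_Icc_self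
  have I2 : IntegrableOn (fun t : ℝ => chebE t * ww t) (Set.Ioc 1 (n:ℝ)) :=
    integrableOn_EW.mono_set Set.Ioc_subset_Ioi_self
  have key : ∀ t : ℝ, (-(ww t)) * chebTheta t = -(t * ww t) + -(chebE t * ww t) := by
    intro t; rw [chebE]; ring
  simp only [key]
  have I1n : IntegrableOn (fun t : ℝ => -(t * ww t)) (Set.Ioc 1 (n:ℝ)) := I1.neg
  have I2n : IntegrableOn (fun t : ℝ => -(chebE t * ww t)) (Set.Ioc 1 (n:ℝ)) := I2.neg
  rw [integral_add I1n I2n, integral_neg, integral_neg, ftc_step n hn]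
  ring

lemma tendsto_ffth : Filter.Tendsto (fun n : ℕ => ff n * chebTheta n) Filter.atTop (nhds 0) := by
  apply squeeze_zero' (g := fun n : ℕ => 10 / (n:ℝ))
  · filter_upwards [Filter.eventually_ge_atTop 1] with n hn
    have h1 : (1:ℝ) ≤ (n:ℝ) := by exact_mod_cast hn
    have h0 : (0:ℝ) < (n:ℝ) := by linarith
    have : (0:ℝ) ≤ ff n := by rw [ff]; positivity
    exact mul_nonneg this (theta_nonneg _)
  · filter_upwards [Filter.eventually_ge_atTop 1] with n hn
    have h1 : (1:ℝ) ≤ (n:ℝ) := by exact_mod_cast hn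
    have h0 : (0:ℝ) < (n:ℝ) := by linarith
    have hff : ff n ≤ 5 / (n:ℝ)^2 := by
      rw [ff, div_le_div_iff₀ (by positivity) (by positivity)]
      nlinarith [pow_le_pow_left₀ (by positivity : (0:ℝ) ≤ (n:ℝ))
        (by linarith : (n:ℝ) ≤ (n:ℝ)+1) 3, pow_pos h0 2, pow_pos h0 4, sq_nonneg ((n:ℝ)-1)]
    have hth : chebTheta n ≤ (n:ℝ) * 2 := by
      have := theta_le (n:ℝ) h0.le
      have h4 : Real.log 4 ≤ 2 := by
        have e1 : (2:ℝ) ≤ Real.exp 1 := by nlinarith [Real.add_one_le_exp (1:ℝ)]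
        have h2 : (4:ℝ) ≤ Real.exp 2 := by
          have : Real.exp 2 = Real.exp 1 * Real.exp 1 := by rw [← Real.exp_add]; norm_num
          nlinarith
        calc Real.log 4 ≤ Real.log (Real.exp 2) := Real.log_le_log (by norm_num) h2
          _ = 2 := Real.log_exp 2
      nlinarith
    calc ff n * chebTheta n ≤ (5 / (n:ℝ)^2) * ((n:ℝ) * 2) := by
          apply mul_le_mul hff hth (theta_nonneg _) (by positivity)
      _ = 10 / (n:ℝ) := by field_simp; ring
  · exact tendsto_const_div_atTop_nhds_zero_nat 10

lemma tendsto_AA : Filter.Tendsto (fun n : ℕ => AA n) Filter.atTop (nhds 0) := by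
  have hreal : Filter.Tendsto AA Filter.atTop (nhds 0) := by
    have h1 : Filter.Tendsto (fun t : ℝ => (t^2 + 3*t + 1) / (t+1)^3)
        Filter.atTop (nhds 0) := by
      apply squeeze_zero' (g := fun t : ℝ => 5 / t)
      · filter_upwards [Filter.eventually_ge_atTop 1] with t ht
        positivity
      · filter_upwards [Filter.eventually_ge_atTop 1] with t ht
        have h0 : (0:ℝ) < t := by linarith
        rw [div_le_div_iff₀ (by positivity) h0]
        nlinarith [pow_pos h0 3, sq_nonneg (t-1)]
      · exact tendsto_const_nhds.div_atTop Filter.tendsto_id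
    have h2 : Filter.Tendsto (fun t : ℝ => 1 / (2*(t+1)^2))
        Filter.atTop (nhds 0) := by
      apply Filter.Tendsto.div_atTop tendsto_const_nhds
      apply Filter.tendsto_atTop_mono (f := fun t : ℝ => t)
      · intro t; nlinarith [sq_nonneg (t+1), sq_nonneg t]
      · exact Filter.tendsto_id
    have h3 : Filter.Tendsto (fun t : ℝ => Real.log t - Real.log (t+1))
        Filter.atTop (nhds 0) := by
      have hcomp : Filter.Tendsto (fun t : ℝ => 1 + t⁻¹) Filter.atTop (nhds 1) := by
        have := tendsto_inv_atTop_zero (𝕜 := ℝ)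
        simpa using (tendsto_const_nhds (x := (1:ℝ)) (f := Filter.atTop)).add this
      have hlog : Filter.Tendsto (fun t : ℝ => Real.log (1 + t⁻¹)) Filter.atTop (nhds 0) := by
        have := (Real.continuousAt_log (x := 1) one_ne_zero).tendsto.comp hcomp
        simpa [Function.comp_def] using this
      have heq : ∀ᶠ t : ℝ in Filter.atTop,
          -Real.log (1 + t⁻¹) = Real.log t - Real.log (t+1) := by
        filter_upwards [Filter.eventually_gt_atTop 0] with t ht
        rw [show (1 + t⁻¹) = (t+1)/t by field_simp,
          Real.log_div (by positivity) ht.ne']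
        ring
      exact Filter.Tendsto.congr' heq (by simpa using hlog.neg)
    have hAA : AA = fun t : ℝ => (-((t^2 + 3*t + 1) / (t+1)^3) - 1 / (2*(t+1)^2))
        + (Real.log t - Real.log (t+1)) := by
      funext t; rw [AA]; ring
    rw [hAA]
    simpa using (h1.neg.sub h2).add h3
  exact hreal.comp tendsto_natCast_atTop_atTop

lemma tendsto_int : Filter.Tendsto (fun n : ℕ => ∫ t in Set.Ioc 1 (n:ℝ), chebE t * ww t)
    Filter.atTop (nhds (∫ t in Set.Ioi (1:ℝ), chebE t * ww t)) := by
  have h := MeasureTheory.intervalIntegral_tendsto_integral_Ioi (a := (1:ℝ))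
    (f := fun t => chebE t * ww t) (b := fun n : ℕ => (n:ℝ)) integrableOn_EW
    tendsto_natCast_atTop_atTop
  apply Filter.Tendsto.congr' _ h
  filter_upwards [Filter.eventually_ge_atTop 1] with n hn
  rw [intervalIntegral.integral_of_le (by exact_mod_cast hn)]

lemma term_eq (k : ℕ) : ff k * cc k = (if Nat.Prime k then
    Real.log k * ((k:ℝ)^2 + 3*(k:ℝ) + 1) / ((k:ℝ) * ((k:ℝ) + 1)^3) else 0) := by
  rw [cc, ff]
  split
  · rw [mul_comm, mul_div_assoc]
  · rw [mul_zero]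

lemma tendsto_S : Filter.Tendsto (fun n : ℕ => ∑ k ∈ Finset.Icc 0 n, ff k * cc k)
    Filter.atTop (nhds (∑' p : ℕ, if Nat.Prime p then
      Real.log p * ((p:ℝ)^2 + 3*(p:ℝ) + 1) / ((p:ℝ) * ((p:ℝ) + 1)^3) else 0)) := by
  have h := summable_term.hasSum.tendsto_sum_nat
  have h2 := h.comp (Filter.tendsto_add_atTop_nat 1)
  apply h2.congr
  intro n
  simp only [Function.comp_apply]
  rw [show Finset.Icc 0 n = Finset.range (n+1) by ext k; simp [Nat.lt_succ_iff]]
  exact (Finset.sum_congr rfl fun k _ => term_eq k).symm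

theorem stmt14 :
    Summable (fun p : ℕ => if Nat.Prime p then
        Real.log p * ((p:ℝ)^2 + 3*(p:ℝ) + 1) / ((p:ℝ) * ((p:ℝ) + 1)^3) else 0) ∧
    IntegrableOn (fun t : ℝ => chebE t * (2*t^3 + 8*t^2 + 4*t + 1) / (t^2 * (t+1)^4))
      (Set.Ioi 1) ∧
    (∑' p : ℕ, if Nat.Prime p then
        Real.log p * ((p:ℝ)^2 + 3*(p:ℝ) + 1) / ((p:ℝ) * ((p:ℝ) + 1)^3) else 0)
      = 3/4 + Real.log 2
        + ∫ t in Set.Ioi (1:ℝ), chebE t * (2*t^3 + 8*t^2 + 4*t + 1) / (t^2 * (t+1)^4) := by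
  have hfun : (fun t : ℝ => chebE t * (2*t^3 + 8*t^2 + 4*t + 1) / (t^2 * (t+1)^4))
      = fun t => chebE t * ww t := by
    funext t; rw [ww, mul_div_assoc]
  refine ⟨summable_term, ?_, ?_⟩
  · rw [hfun]; exact integrableOn_EW
  · rw [hfun]
    have hR : Filter.Tendsto (fun n : ℕ => ff n * chebTheta n + (AA n - AA 1)
        + ∫ t in Set.Ioc 1 (n:ℝ), chebE t * ww t) Filter.atTop
        (nhds (3/4 + Real.log 2 + ∫ t in Set.Ioi (1:ℝ), chebE t * ww t)) := by
      rw [AA_one]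
      have := (tendsto_ffth.add (tendsto_AA.sub_const (-(3/4) - Real.log 2))).add tendsto_int
      convert this using 2
      ring
    have heq : ∀ᶠ n : ℕ in Filter.atTop, ∑ k ∈ Finset.Icc 0 n, ff k * cc k
        = ff n * chebTheta n + (AA n - AA 1) + ∫ t in Set.Ioc 1 (n:ℝ), chebE t * ww t := by
      filter_upwards [Filter.eventually_ge_atTop 1] with n hn
      rw [abel_step n hn, split_step n hn]
      ring
    exact tendsto_nhds_unique (tendsto_S.congr' heq) hR
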